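/- Let Ω ⊆ ℝ^N be an open set with γ_N(Ω) < 1. Then lim_{α → -∞} Q_p(α,Ω) = 0. -/

import Mathlib

open MeasureTheory Real Filter Set
open scoped ENNReal Topology RealInnerProductSpace

noncomputable section

/-- Euclidean space `ℝ^N`. -/
abbrev E (N : ℕ) : Type := EuclideanSpace ℝ (Fin N)

/-- The Gaussian density `φ_N(x) = (2π)^{-N/2} exp(-|x|²/2)`. -/
def phiN (N : ℕ) (x : E N) : ℝ :=
  (2 * π) ^ (-(N : ℝ) / 2) * Real.exp (-‖x‖ ^ 2 / 2)

/-- The Gaussian measure `γ_N`. -/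
def gaussM (N : ℕ) : Measure (E N) :=
  volume.withDensity fun x => ENNReal.ofReal (phiN N x)

/-- An element of the weighted Sobolev space `W^{1,p}_0(Ω, φ_N)`: a function together
with its (weak) gradient, arising as a limit of smooth compactly supported functions
with support in `Ω` in the weighted Sobolev norm. -/
structure W1p0 (N : ℕ) (p : ℝ) (Ω : Set (E N)) where
  toFun : E N → ℝ
  grad : E N → E N
  int_toFun : IntegrableOn toFun Ω (gaussM N)
  memLp_toFun : IntegrableOn (fun x => |toFun x| ^ p) Ω (gaussM N)
  memLp_grad : IntegrableOn (fun x => ‖grad x‖ ^ p) Ω (gaussM N)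
  approx : ∃ f : ℕ → E N → ℝ,
      (∀ k, ContDiff ℝ (⊤ : ℕ∞) (f k)) ∧
      (∀ k, HasCompactSupport (f k)) ∧
      (∀ k, tsupport (f k) ⊆ Ω) ∧
      Filter.Tendsto (fun k =>
          (∫ x, |f k x - toFun x| ^ p ∂(gaussM N)) +
          (∫ x, ‖gradient (f k) x - grad x‖ ^ p ∂(gaussM N)))
        atTop (nhds 0)

/-- First Dirichlet eigenvalue `λ₁(Ω)` of the Gaussian `p`-Laplacian. -/
def lam1 (N : ℕ) (p : ℝ) (Ω : Set (E N)) : ℝ :=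
  sInf { r : ℝ | ∃ w : W1p0 N p Ω,
    ¬ (w.toFun =ᵐ[(gaussM N).restrict Ω] (0 : E N → ℝ)) ∧
    r = (∫ x in Ω, ‖w.grad x‖ ^ p ∂(gaussM N)) / (∫ x in Ω, |w.toFun x| ^ p ∂(gaussM N)) }

/-- The functional `F_α`. -/
def Ffun (N : ℕ) (p : ℝ) (Ω : Set (E N)) (α : ℝ) (w : W1p0 N p Ω) : ℝ :=
  -(∫ x in Ω, ‖w.grad x‖ ^ p ∂(gaussM N)) + α * (∫ x in Ω, |w.toFun x| ^ p ∂(gaussM N))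
    + p * (∫ x in Ω, w.toFun x ∂(gaussM N))

/-- The generalized torsional rigidity `Q_p(α,Ω)` (as an extended real number). -/
def Qp (N : ℕ) (p α : ℝ) (Ω : Set (E N)) : EReal :=
  sSup { r : EReal | ∃ w : W1p0 N p Ω, r = ((Ffun N p Ω α w : ℝ) : EReal) }

/-- Weak solution of the generalized torsion problem
`-div(φ_N |Dv|^{p-2} Dv) = α φ_N |v|^{p-2} v + φ_N` in `Ω`, `v = 0` on `∂Ω`. -/
def IsTorsionSol (N : ℕ) (p : ℝ) (Ω : Set (E N)) (α : ℝ) (v : W1p0 N p Ω) : Prop :=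
  ∀ φ : W1p0 N p Ω,
    (∫ x in Ω, ‖v.grad x‖ ^ (p - 2) * ⟪v.grad x, φ.grad x⟫ ∂(gaussM N)) =
      α * (∫ x in Ω, |v.toFun x| ^ (p - 2) * v.toFun x * φ.toFun x ∂(gaussM N))
        + (∫ x in Ω, φ.toFun x ∂(gaussM N))

/-- Eigenfunction of the Gaussian `p`-Laplacian on `Ω` associated with `lam`. -/
def IsEigenfun (N : ℕ) (p : ℝ) (Ω : Set (E N)) (lam : ℝ) (u : W1p0 N p Ω) : Prop :=
  ¬ (u.toFun =ᵐ[(gaussM N).restrict Ω] (0 : E N → ℝ)) ∧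
  ∀ φ : W1p0 N p Ω,
    (∫ x in Ω, ‖u.grad x‖ ^ (p - 2) * ⟪u.grad x, φ.grad x⟫ ∂(gaussM N)) =
      lam * (∫ x in Ω, |u.toFun x| ^ (p - 2) * u.toFun x * φ.toFun x ∂(gaussM N))

/-- The half-space `H_t = {x : x₁ < t}`. -/
def halfSpace (N : ℕ) (t : ℝ) : Set (E (N + 1)) := { x | x 0 < t }

/-- One-dimensional Gaussian density. -/
def phi1 (σ : ℝ) : ℝ := (2 * π) ^ (-(1 : ℝ) / 2) * Real.exp (-σ ^ 2 / 2)

/-- Gaussian distribution function of `|u|` on `Ω`. -/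
def distFun (N : ℕ) (Ω : Set (E N)) (u : E N → ℝ) (t : ℝ) : ℝ :=
  (gaussM N (Ω ∩ { x | t < |u x| })).toReal

/-- Decreasing rearrangement of `u` with respect to the Gaussian measure. -/
def decRearr (N : ℕ) (Ω : Set (E N)) (u : E N → ℝ) (s : ℝ) : ℝ :=
  sInf { t : ℝ | 0 ≤ t ∧ distFun N Ω u t ≤ s }

/-- One-dimensional Gaussian cumulative distribution function `k`. -/
def gaussCDF (σ : ℝ) : ℝ := ∫ τ in Iio σ, phi1 τ

/-- The Gaussian rearrangement `u^♯` of `u`. -/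
def rearr (N : ℕ) (Ω : Set (E (N + 1))) (u : E (N + 1) → ℝ) (x : E (N + 1)) : ℝ :=
  decRearr (N + 1) Ω u (gaussCDF (x 0))


/-- The zero element of `W^{1,p}_0`. -/
def zeroW (N : ℕ) (p : ℝ) (Ω : Set (E N)) (hp : p ≠ 0) : W1p0 N p Ω where
  toFun := fun _ => 0
  grad := fun _ => 0
  int_toFun := integrableOn_zero
  memLp_toFun := by
    simp only [abs_zero, Real.zero_rpow hp]
    exact integrableOn_zero
  memLp_grad := by
    simp only [norm_zero, Real.zero_rpow hp]
    exact integrableOn_zero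
  approx := by
    refine ⟨fun _ _ => 0, fun _ => contDiff_const, fun _ => ?_, fun _ => ?_, ?_⟩
    · exact HasCompactSupport.intro isCompact_empty (fun x _ => rfl)
    · have : tsupport (fun _ : E N => (0:ℝ)) = ∅ := by simp [tsupport]
      rw [this]; exact empty_subset _
    · have : (fun k : ℕ =>
          (∫ x, |(fun _ : E N => (0:ℝ)) x - (fun _ : E N => (0:ℝ)) x| ^ p ∂(gaussM N)) +
          (∫ x, ‖gradient (fun _ : E N => (0:ℝ)) x - (fun _ : E N => (0:E N)) x‖ ^ p
            ∂(gaussM N))) = fun _ => 0 := by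
        funext k
        simp [gradient_const, Real.zero_rpow hp]
      rw [this]
      exact tendsto_const_nhds

lemma Ffun_zeroW (N : ℕ) (p : ℝ) (Ω : Set (E N)) (hp : p ≠ 0) (α : ℝ) :
    Ffun N p Ω α (zeroW N p Ω hp) = 0 := by
  simp [Ffun, zeroW, Real.zero_rpow hp]

lemma abs_le_eps_add {p : ℝ} (hp : 1 < p) {ε : ℝ} (hε : 0 < ε) (a : ℝ) :
    |a| ≤ ε + ε ^ (1 - p) * |a| ^ p := by
  rcases le_or_gt |a| ε with h | h
  · have h1 : 0 ≤ ε ^ (1 - p) * |a| ^ p :=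
      mul_nonneg (Real.rpow_nonneg hε.le _) (Real.rpow_nonneg (abs_nonneg a) _)
    linarith
  · have ha : 0 < |a| := hε.trans h
    have h2 : |a| ^ (1 - p) ≤ ε ^ (1 - p) :=
      Real.rpow_le_rpow_of_nonpos hε h.le (by linarith)
    have h3 : |a| = |a| ^ (1 - p) * |a| ^ p := by
      rw [← Real.rpow_add ha]; simp
    calc |a| = |a| ^ (1 - p) * |a| ^ p := h3
      _ ≤ ε ^ (1 - p) * |a| ^ p :=
        mul_le_mul_of_nonneg_right h2 (Real.rpow_nonneg (abs_nonneg a) _)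
      _ ≤ ε + ε ^ (1 - p) * |a| ^ p := le_add_of_nonneg_left hε.le

lemma Ffun_le (N : ℕ) (p : ℝ) (hp : 1 < p) (Ω : Set (E N)) (hmeas : gaussM N Ω < 1)
    {ε : ℝ} (hε : 0 < ε) {α : ℝ} (hα : α ≤ -(p * ε ^ (1 - p))) (w : W1p0 N p Ω) :
    Ffun N p Ω α w ≤ p * ε := by
  have hfin : gaussM N Ω < ⊤ := hmeas.trans_le le_top
  set γ := (gaussM N).restrict Ω with hγ
  have hμ : (gaussM N Ω).toReal ≤ 1 := by
    have := ENNReal.toReal_mono (by simp) hmeas.le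
    simpa using this
  set s := ∫ x in Ω, |w.toFun x| ^ p ∂(gaussM N) with hs
  have hs0 : 0 ≤ s :=
    integral_nonneg fun x => Real.rpow_nonneg (abs_nonneg _) _
  have hG0 : 0 ≤ ∫ x in Ω, ‖w.grad x‖ ^ p ∂(gaussM N) :=
    integral_nonneg fun x => Real.rpow_nonneg (norm_nonneg _) _
  -- integrability of the majorant
  have hInt : IntegrableOn (fun x => ε + ε ^ (1 - p) * |w.toFun x| ^ p) Ω (gaussM N) :=
    (integrableOn_const hfin.ne).add (w.memLp_toFun.const_mul _)
  have hI : (∫ x in Ω, w.toFun x ∂(gaussM N)) ≤ ε + ε ^ (1 - p) * s := by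
    have h1 : (∫ x in Ω, w.toFun x ∂(gaussM N)) ≤
        ∫ x in Ω, (ε + ε ^ (1 - p) * |w.toFun x| ^ p) ∂(gaussM N) := by
      refine integral_mono w.int_toFun hInt fun x => ?_
      exact (le_abs_self _).trans (abs_le_eps_add hp hε _)
    have h2 : (∫ x in Ω, (ε + ε ^ (1 - p) * |w.toFun x| ^ p) ∂(gaussM N)) =
        (gaussM N Ω).toReal * ε + ε ^ (1 - p) * s := by
      rw [integral_add (show IntegrableOn (fun _ => ε) Ω (gaussM N) from integrableOn_const hfin.ne) (w.memLp_toFun.const_mul _),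
        integral_const, integral_const_mul]
      simp [Measure.restrict_apply_univ, smul_eq_mul, measureReal_def, hs]
    have h3 : (gaussM N Ω).toReal * ε ≤ ε := by
      nlinarith
    linarith
  have hps : 0 < p := by linarith
  have hkey : α * s + p * ε ^ (1 - p) * s ≤ 0 := by
    have : α + p * ε ^ (1 - p) ≤ 0 := by linarith
    nlinarith
  have hpI : p * (∫ x in Ω, w.toFun x ∂(gaussM N)) ≤ p * (ε + ε ^ (1 - p) * s) :=
    mul_le_mul_of_nonneg_left hI hps.le
  unfold Ffun
  nlinarith

/-- `Q_p(α,Ω) → 0` as `α → -∞`. -/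
theorem Qp_tendsto_zero_atBot (N : ℕ) (p : ℝ) (hp : 1 < p)
    (Ω : Set (E N)) (hΩ : IsOpen Ω) (hmeas : gaussM N Ω < 1) :
    Filter.Tendsto (fun α : ℝ => Qp N p α Ω) atBot (nhds (0 : EReal)) := by
  have hp0 : p ≠ 0 := by positivity
  have hps : 0 < p := by linarith
  have hQ0 : ∀ α : ℝ, (0 : EReal) ≤ Qp N p α Ω := by
    intro α
    apply le_sSup
    exact ⟨zeroW N p Ω hp0, by rw [Ffun_zeroW]; simp⟩
  rw [tendsto_order]
  constructor
  · intro b hb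
    filter_upwards with α
    exact lt_of_lt_of_le hb (hQ0 α)
  · intro b hb
    obtain ⟨c, hc0, hcb⟩ := EReal.exists_between_coe_real hb
    have hc0' : (0 : ℝ) < c := by exact_mod_cast hc0
    set ε : ℝ := c / p with hε
    have hεpos : 0 < ε := div_pos hc0' hps
    have hpε : p * ε = c := by rw [hε]; field_simp
    filter_upwards [eventually_le_atBot (-(p * ε ^ (1 - p)))] with α hα
    refine lt_of_le_of_lt ?_ hcb
    apply sSup_le
    rintro r ⟨w, rfl⟩
    have := Ffun_le N p hp Ω hmeas hεpos hα w
    rw [hpε] at this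
    exact_mod_cast this

end
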